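/- Let $\beta, \delta \in \mathbb{C}$ and let $y$ be holomorphic in a neighborhood of $x = 0$ with $y(0) = a$ where $a \notin \{0, 1\}$, and suppose $y$ solves the Painlevé VI equation with parameters $(0, \beta, 0, \delta)$ on a punctured neighborhood of $0$ (where $y(x) \neq 0, 1, x$). Then $y'(0) = (1-a)(\delta - \beta)$. -/

import Mathlib

/-!
Multiplying the equation by `x` cancels its simple pole at `x = 0` when `α = γ = 0`: for a
solution holomorphic at `0`, `x y''(x)` equals a function `F(x, y(x), y'(x))` continuous at
`x = 0`. Letting `x → 0`, the left side tends to `0`, while `F(0, a, y'(0))` is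
`-y'(0) + (1 - a)(δ - β)`.
-/

/-- The sixth Painlevé equation with parameters `(α, β, γ, δ)`, as a condition on a
function `y` at a point `x`. -/
def PVI (a b c d : ℂ) (y : ℂ → ℂ) (x : ℂ) : Prop :=
  deriv (deriv y) x =
    (1/2) * (1/(y x) + 1/(y x - 1) + 1/(y x - x)) * (deriv y x)^2
    - (1/x + 1/(x - 1) + 1/(y x - x)) * deriv y x
    + (y x * (y x - 1) * (y x - x)) / (x^2 * (x - 1)^2) *
      (a + b * x / (y x)^2 + c * (x - 1) / (y x - 1)^2 + d * (x * (x - 1)) / (y x - x)^2)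

open Filter Topology

/-- `x` times the right-hand side of `PVI 0 β 0 δ`, in terms of `u = y x` and `v = y' x`, with the
factor `x` cancelled against the denominators. -/
noncomputable def pviScaledRHS (β δ x u v : ℂ) : ℂ :=
  x * (1/2) * (1/u + 1/(u - 1) + 1/(u - x)) * v^2
    - (1 + x/(x - 1) + x/(u - x)) * v
    + β * (u * (u - 1) * (u - x)) / ((x - 1)^2 * u^2)
    + δ * (u * (u - 1)) / ((x - 1) * (u - x))

theorem mul_deriv_deriv_eq_pviScaledRHS {β δ x : ℂ} {y : ℂ → ℂ} (hx0 : x ≠ 0) (hx1 : x ≠ 1)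
    (hy0 : y x ≠ 0) (hy1 : y x ≠ 1) (hyx : y x ≠ x) (h : PVI 0 β 0 δ y x) :
    x * deriv (deriv y) x = pviScaledRHS β δ x (y x) (deriv y x) := by
  have hx1' : x - 1 ≠ 0 := sub_ne_zero.2 hx1
  have hy1' : y x - 1 ≠ 0 := sub_ne_zero.2 hy1
  have hyx' : y x - x ≠ 0 := sub_ne_zero.2 hyx
  rw [h, pviScaledRHS]
  field_simp
  ring

theorem pviScaledRHS_zero {β δ a : ℂ} (ha0 : a ≠ 0) (v : ℂ) :
    pviScaledRHS β δ 0 a v = -v + (1 - a) * (δ - β) := by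
  simp only [pviScaledRHS, sub_zero, zero_div, zero_mul, add_zero]
  field_simp
  ring

theorem ContinuousAt.pviScaledRHS {β δ : ℂ} {u v : ℂ → ℂ} (hu : ContinuousAt u 0)
    (hv : ContinuousAt v 0) (hu0 : u 0 ≠ 0) (hu1 : u 0 ≠ 1) :
    ContinuousAt (fun x => pviScaledRHS β δ x (u x) (v x)) 0 := by
  unfold _root_.pviScaledRHS
  fun_prop (disch := simp [hu0, hu1, sub_eq_zero])

theorem taylor_solution_first_coefficient (β δ a : ℂ) (y : ℂ → ℂ)
    (ha0 : a ≠ 0) (ha1 : a ≠ 1)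
    (hy : AnalyticAt ℂ y 0) (h0 : y 0 = a)
    (hsol : ∀ᶠ x in nhdsWithin 0 {(0 : ℂ)}ᶜ,
      x ≠ 1 ∧ y x ≠ 0 ∧ y x ≠ 1 ∧ y x ≠ x ∧ PVI 0 β 0 δ y x) :
    deriv y 0 = (1 - a) * (δ - β) := by
  have hlhs : ContinuousAt (fun x => x * deriv (deriv y) x) 0 := by fun_prop
  have hrhs : ContinuousAt (fun x => pviScaledRHS β δ x (y x) (deriv y x)) 0 :=
    hy.continuousAt.pviScaledRHS hy.deriv.continuousAt (h0 ▸ ha0) (h0 ▸ ha1)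
  have heq : (fun x => x * deriv (deriv y) x) =ᶠ[𝓝[≠] 0]
      fun x => pviScaledRHS β δ x (y x) (deriv y x) := by
    filter_upwards [hsol, self_mem_nhdsWithin] with x ⟨hx1, hy0, hy1, hyx, hpvi⟩ hx0
    exact mul_deriv_deriv_eq_pviScaledRHS hx0 hx1 hy0 hy1 hyx hpvi
  have hat0 := ((hlhs.eventuallyEq_nhds_iff_eventuallyEq_nhdsNE hrhs).1 heq).eq_of_nhds
  rw [zero_mul, h0, pviScaledRHS_zero ha0] at hat0
  linear_combination hat0
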